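/- For every real λ, the skew-normal density is strongly unimodal: the function x ↦ log(2 φ(x) Φ(λx)) is concave on ℝ. -/

import Mathlib

/-!
The logarithm splits as `log 2 + log φ(x) + log Φ(λx)`. The middle term is the concave quadratic
`-x²/2 - log √(2π)`, and the last is a concave function composed with a linear map, because `Φ`
itself is log-concave: `(log Φ)'' = -φ (xΦ + φ) / Φ²`, and `xΦ(x) + φ(x) ≥ 0` for all `x`
(for `x < 0` this is the Mills-ratio bound `Φ(x) ≤ ∫_{t ≤ x} (t/x) φ(t) dt = -φ(x)/x`).
-/

open MeasureTheory

/-- Standard normal density. -/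
noncomputable def normPdf (x : ℝ) : ℝ := Real.exp (-x ^ 2 / 2) / Real.sqrt (2 * Real.pi)

/-- Standard normal cdf. -/
noncomputable def normCdf (x : ℝ) : ℝ := ∫ t in Set.Iic x, normPdf t

open Real Set Filter Topology

lemma normPdf_pos (x : ℝ) : 0 < normPdf x := by
  unfold normPdf
  have : 0 < √(2 * π) := Real.sqrt_pos.mpr (by positivity)
  positivity

lemma continuous_normPdf : Continuous normPdf := by
  unfold normPdf; fun_prop

lemma integrable_normPdf : Integrable normPdf := by
  refine ((integrable_exp_neg_mul_sq (b := 1 / 2) (by norm_num)).div_const √(2 * π)).congr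
    (Eventually.of_forall fun x => ?_)
  unfold normPdf; ring_nf

lemma integrable_mul_normPdf : Integrable fun t : ℝ => t * normPdf t := by
  refine ((integrable_mul_exp_neg_mul_sq (b := 1 / 2) (by norm_num)).div_const √(2 * π)).congr
    (Eventually.of_forall fun x => ?_)
  unfold normPdf; ring_nf

lemma hasDerivAt_normPdf (x : ℝ) : HasDerivAt normPdf (-x * normPdf x) x := by
  have h : HasDerivAt (fun y : ℝ => -y ^ 2 / 2) (-x) x :=
    ((hasDerivAt_pow 2 x).neg.div_const 2).congr_deriv (by ring)
  exact (h.exp.div_const √(2 * π)).congr_deriv (by rw [normPdf]; ring)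

lemma tendsto_normPdf_atBot : Tendsto normPdf atBot (𝓝 0) := by
  have hsq : Tendsto (fun y : ℝ => y ^ 2) atBot atTop := by
    simpa [sq] using tendsto_id.atBot_mul_atBot₀ (tendsto_id (α := ℝ))
  have h : Tendsto (fun y : ℝ => -y ^ 2 / 2) atBot atBot :=
    (tendsto_neg_atTop_atBot.comp hsq).atBot_div_const (by norm_num)
  have := (Real.tendsto_exp_atBot.comp h).div_const √(2 * π)
  rwa [zero_div] at this

lemma log_normPdf (x : ℝ) : Real.log (normPdf x) = -x ^ 2 / 2 - Real.log √(2 * π) := by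
  have : 0 < √(2 * π) := Real.sqrt_pos.mpr (by positivity)
  rw [normPdf, Real.log_div (Real.exp_pos _).ne' this.ne', Real.log_exp]

lemma concaveOn_log_normPdf : ConcaveOn ℝ univ fun x => Real.log (normPdf x) := by
  refine (((even_two.convexOn_pow (𝕜 := ℝ)).neg.smul (c := (1 / 2 : ℝ)) (by norm_num)).add_const
    (-Real.log √(2 * π))).congr fun x _ => ?_
  simp only [log_normPdf, Pi.add_apply, Pi.neg_apply, smul_eq_mul]
  ring

lemma normCdf_pos (x : ℝ) : 0 < normCdf x := by
  have hsupp : Function.support normPdf = univ :=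
    Function.support_eq_univ fun t => (normPdf_pos t).ne'
  rw [normCdf, setIntegral_pos_iff_support_of_nonneg_ae
    (Eventually.of_forall fun t => (normPdf_pos t).le) integrable_normPdf.integrableOn,
    hsupp, univ_inter]
  simp [Real.volume_Iic]

lemma hasDerivAt_normCdf (x : ℝ) : HasDerivAt normCdf (normPdf x) x := by
  have hsplit : ∀ y, normCdf y = normCdf 0 + ∫ t in (0 : ℝ)..y, normPdf t := fun y => by
    rw [normCdf, normCdf, ← intervalIntegral.integral_Iic_sub_Iic
      integrable_normPdf.integrableOn integrable_normPdf.integrableOn]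
    ring
  have h := (intervalIntegral.integral_hasDerivAt_right (a := 0) (b := x)
    integrable_normPdf.intervalIntegrable
    continuous_normPdf.stronglyMeasurable.stronglyMeasurableAtFilter
    continuous_normPdf.continuousAt).const_add (normCdf 0)
  exact h.congr_of_eventuallyEq (Eventually.of_forall hsplit)

lemma setIntegral_Iic_mul_normPdf (x : ℝ) : ∫ t in Iic x, t * normPdf t = -normPdf x := by
  have h := integral_Iic_of_hasDerivAt_of_tendsto' (a := x) (f := fun y => -normPdf y)
    (fun y _ => (hasDerivAt_normPdf y).neg.congr_deriv (by ring))
    integrable_mul_normPdf.integrableOn (by simpa using tendsto_normPdf_atBot.neg)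
  simpa using h

lemma normCdf_le_neg_normPdf_div {x : ℝ} (hx : x < 0) : normCdf x ≤ -normPdf x / x := by
  calc normCdf x ≤ ∫ t in Iic x, x⁻¹ * (t * normPdf t) := by
        refine setIntegral_mono_on integrable_normPdf.integrableOn
          (integrable_mul_normPdf.const_mul _).integrableOn measurableSet_Iic fun t ht => ?_
        have h1 : 1 ≤ x⁻¹ * t := by
          rw [← div_eq_inv_mul, le_div_iff_of_neg hx]
          simpa using ht.out
        nlinarith [normPdf_pos t]
    _ = -normPdf x / x := by
        rw [integral_const_mul, setIntegral_Iic_mul_normPdf]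
        ring

lemma mul_normCdf_add_normPdf_nonneg (x : ℝ) : 0 ≤ x * normCdf x + normPdf x := by
  rcases le_or_gt 0 x with hx | hx
  · have := (normCdf_pos x).le
    have := (normPdf_pos x).le
    positivity
  · have := (le_div_iff_of_neg hx).mp (normCdf_le_neg_normPdf_div hx)
    linarith

lemma hasDerivAt_normPdf_div_normCdf (x : ℝ) :
    HasDerivAt (fun y => normPdf y / normCdf y)
      (-(normPdf x * (x * normCdf x + normPdf x)) / normCdf x ^ 2) x :=
  ((hasDerivAt_normPdf x).div (hasDerivAt_normCdf x) (normCdf_pos x).ne').congr_deriv (by ring)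

lemma hasDerivAt_log_normCdf (x : ℝ) :
    HasDerivAt (fun y => Real.log (normCdf y)) (normPdf x / normCdf x) x :=
  (hasDerivAt_normCdf x).log (normCdf_pos x).ne'

lemma concaveOn_log_normCdf : ConcaveOn ℝ univ fun x => Real.log (normCdf x) := by
  refine concaveOn_of_hasDerivWithinAt2_nonpos convex_univ
    (fun x _ => (hasDerivAt_log_normCdf x).continuousAt.continuousWithinAt)
    (fun x _ => (hasDerivAt_log_normCdf x).hasDerivWithinAt)
    (fun x _ => (hasDerivAt_normPdf_div_normCdf x).hasDerivWithinAt) fun x _ => ?_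
  have := mul_nonneg (normPdf_pos x).le (mul_normCdf_add_normPdf_nonneg x)
  exact div_nonpos_of_nonpos_of_nonneg (neg_nonpos.mpr this) (sq_nonneg _)

/-- The skew-normal density is strongly unimodal: its logarithm is concave on `ℝ`. -/
theorem sn_log_concave (l : ℝ) :
    ConcaveOn ℝ Set.univ fun x : ℝ => Real.log (2 * normPdf x * normCdf (l * x)) := by
  have hsplit : (fun x : ℝ => Real.log (2 * normPdf x * normCdf (l * x))) =
      fun x => Real.log (normPdf x) + Real.log (normCdf (l * x)) + Real.log 2 := by
    ext x
    rw [Real.log_mul (by have := normPdf_pos x; positivity) (normCdf_pos _).ne',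
      Real.log_mul two_ne_zero (normPdf_pos x).ne']
    ring
  rw [hsplit]
  exact (concaveOn_log_normPdf.add
    (concaveOn_log_normCdf.comp_linearMap (LinearMap.mulLeft ℝ l))).add_const _
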